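/- Let T be a finite multiset of rows and let C be the sub-multiset 'CTE' obtained by filtering T with a three-valued predicate p, and let A be a finite multiset (the cross product of two other tables). Then: if C is nonempty, the cross product A × C is nonempty iff A is nonempty; the rewrite 'A × C UNION ALL (A filtered by NOT EXISTS C)' equals A × C when C is nonempty and equals A when C is empty; and consequently crossJoin A C + (if C = 0 then A else 0) equals the multiset of pairs from the left join of A with C under the always-true condition (with the convention that unmatched rows of A are still emitted), projected appropriately, i.e. the rewrite equals the query 'A LEFT JOIN (T WHERE p)' projected to the A-columns. -/
import Mathlib


attribute [local instance] Multiset.decidableExistsMultiset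

inductive TV | True3 | False3 | Unknown3
deriving DecidableEq

open TV

def leftJoin {α β : Type*} (L : Multiset α) (R : Multiset β) (c : α → β → TV) :
    Multiset (α × Option β) :=
  L.bind fun l =>
    if ∃ r ∈ R, c l r = True3 then
      (R.filter (fun r => c l r = True3)).map (fun r => (l, some r))
    else {(l, none)}

theorem cte_union_all_rewrite {α γ : Type*} [DecidableEq γ]
    (T : Multiset γ) (p : γ → TV) (A : Multiset α) :
    let C := T.filter (fun r => p r = True3)
    (C ≠ 0 → (((A.bind fun a => C.map fun _ => a) ≠ 0) ↔ A ≠ 0)) ∧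
    (A.bind fun a => C.map fun _ => a) + (if C = 0 then A else 0) =
      (leftJoin A C (fun _ _ => True3)).map (fun q => q.1) := by
  intro C
  constructor
  · intro hC
    constructor
    · intro h hA
      exact h (by simp [hA])
    · intro hA h
      obtain ⟨a, ha⟩ := Multiset.exists_mem_of_ne_zero hA
      obtain ⟨c, hc⟩ := Multiset.exists_mem_of_ne_zero hC
      have : a ∈ A.bind fun a => C.map fun _ => a := by
        rw [Multiset.mem_bind]
        exact ⟨a, ha, Multiset.mem_map.mpr ⟨c, hc, rfl⟩⟩
      rw [h] at this
      simp at this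
  · by_cases hC : C = 0
    · simp [hC, leftJoin, Multiset.map_bind]
    · have he : ∃ r ∈ C, True3 = True3 := by
        obtain ⟨c, hc⟩ := Multiset.exists_mem_of_ne_zero hC
        exact ⟨c, hc, rfl⟩
      simp only [hC, if_neg, leftJoin, if_pos he, Multiset.map_bind, Multiset.map_map]
      have h2 : ∃ r ∈ C, True := by
        obtain ⟨c, hc⟩ := Multiset.exists_mem_of_ne_zero hC
        exact ⟨c, hc, trivial⟩
      simp only [Multiset.filter_eq_self.mpr (fun _ _ => trivial)]
      rw [show (if False then A else 0) = 0 from rfl, add_zero]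
      refine congrArg A.bind (funext fun a => ?_)
      rw [if_pos h2, Multiset.map_map]
      simp
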